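/- arXiv:1307.0085 — 2 statements merged into one kernel-verified Lean document; each statement's English description precedes it below -/
import Mathlib

section
/- Fix β > 0. For e ∈ [0,1) and ε > −1, define the sequence y^{(e,ε)}(0) = 1 and y^{(e,ε)}(i) = exp( −(1+ε)(1−e)·β·e^{−β·y^{(e,ε)}(i−1)} ) for i ≥ 1. If e_1, e_2 ∈ [0,1) and ε_1, ε_2 > −1 satisfy (1+ε_1)(1−e_1) = (1+ε_2)(1−e_2), then y^{(e_1,ε_1)}(i) = y^{(e_2,ε_2)}(i) for all i ≥ 0; consequently the probabilities of user resolution P_R^{(1)} = 1 − lim_i y^{(e_1,ε_1)}(i) and P_R^{(2)} = 1 − lim_i y^{(e_2,ε_2)}(i) are equal, and the throughputs T^{(1)} = P_R^{(1)}/(1+ε_1) and T^{(2)} = P_R^{(2)}/(1+ε_2) satisfy T^{(2)}·(1−e_1) = T^{(1)}·(1−e_2). -/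
open Filter

/-- For the single-class frameless ALOHA recursion, two scenarios with
(1+ε₁)(1−e₁) = (1+ε₂)(1−e₂) give identical iterates, equal probabilities of user
resolution, and throughputs satisfying T⁽²⁾(1−e₁) = T⁽¹⁾(1−e₂). -/
theorem single_class_scenarios (β : ℝ) (hβ : 0 < β)
    (e₁ e₂ ε₁ ε₂ : ℝ) (he₁ : e₁ ∈ Set.Ico (0 : ℝ) 1) (he₂ : e₂ ∈ Set.Ico (0 : ℝ) 1)
    (hε₁ : -1 < ε₁) (hε₂ : -1 < ε₂)
    (heq : (1 + ε₁) * (1 - e₁) = (1 + ε₂) * (1 - e₂))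
    (y₁ y₂ : ℕ → ℝ) (hy₁0 : y₁ 0 = 1) (hy₂0 : y₂ 0 = 1)
    (hy₁ : ∀ i, y₁ (i + 1) = Real.exp (-((1 + ε₁) * (1 - e₁) * β * Real.exp (-(β * y₁ i)))))
    (hy₂ : ∀ i, y₂ (i + 1) = Real.exp (-((1 + ε₂) * (1 - e₂) * β * Real.exp (-(β * y₂ i)))))
    (ylim₁ ylim₂ : ℝ)
    (hlim₁ : Tendsto y₁ atTop (nhds ylim₁)) (hlim₂ : Tendsto y₂ atTop (nhds ylim₂)) :
    (∀ i, y₁ i = y₂ i) ∧ (1 - ylim₁ = 1 - ylim₂) ∧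
      ((1 - ylim₂) / (1 + ε₂)) * (1 - e₁) = ((1 - ylim₁) / (1 + ε₁)) * (1 - e₂) := by
  have key : ∀ i, y₁ i = y₂ i := by
    intro i
    induction i with
    | zero => rw [hy₁0, hy₂0]
    | succ n ih => rw [hy₁, hy₂, ih, heq]
  have hlim : ylim₁ = ylim₂ := by
    have : Tendsto y₂ atTop (nhds ylim₁) := by
      simpa [funext key] using hlim₁
    exact tendsto_nhds_unique this hlim₂
  refine ⟨key, by rw [hlim], ?_⟩
  have h1 : (1 + ε₁) ≠ 0 := by linarith
  have h2 : (1 + ε₂) ≠ 0 := by linarith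
  rw [hlim]
  field_simp
  linear_combination (1 - ylim₂) * heq
end

section
/- Let (Ω, P) be a probability space, J and L positive integers. For j = 1,…,J let D_j be ℕ-valued random variables with probability generating functions Λ_j(x) = Σ_d P(D_j = d) x^d, and for each j let (S_{j,n})_{n∈ℕ} be random objects each consisting of: a class label C_{j,n} ∈ {1,…,L} with P(C_{j,n} = m) = w_m (w_m ≥ 0, Σ_m w_m = 1), a channel-success indicator E_{j,n} ∈ {0,1} with P(E_{j,n} = 1 | C_{j,n} = m) = 1 − e_m (e_m ∈ [0,1]), ℕ-valued inner degrees D'_{j,n,k} (k = 1,…,L) with generating functions ω_k, and {0,1}-valued leaf indicators Z_{j,n,k,t} with P(Z_{j,n,k,t} = 1) = 1 − y_k (y_k ∈ [0,1]); assume all the random variables D_j, (C_{j,n}, E_{j,n}), D'_{j,n,k}, Z_{j,n,k,t} across all indices are mutually independent except that E_{j,n} may depend on C_{j,n} as specified. Define the slot-resolved event R_{j,n} = {E_{j,n} = 1} ∩ ⋂_{k=1}^L ⋂_{t < D'_{j,n,k}} {Z_{j,n,k,t} = 1}, and the user-unresolved event A = ⋂_{j=1}^J ⋂_{n < D_j}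 R_{j,n}^c. Then P(A) = ∏_{j=1}^J Λ_j( 1 − Σ_{m=1}^L w_m (1 − e_m) ∏_{k=1}^L ω_k(1 − y_k) ). -/
open MeasureTheory ProbabilityTheory Finset

/-- Index of the depth-2 and-or tree family: outer degrees `D j`, slot pairs
`(C j n, E j n)`, inner degrees `D' j n k`, and leaf indicators `Z j n k t`. -/
abbrev andOrIndex (J L : ℕ) : Type :=
  Fin J ⊕ (Fin J × ℕ) ⊕ (Fin J × ℕ × Fin L) ⊕ (Fin J × ℕ × Fin L × ℕ)

/-- Codomain of the `i`-th member of the family. -/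
abbrev andOrType (J L : ℕ) : andOrIndex J L → Type := fun i =>
  match i with
  | .inl _ => ℕ
  | .inr (.inl _) => Fin L × Bool
  | .inr (.inr (.inl _)) => ℕ
  | .inr (.inr (.inr _)) => Bool

instance andOrMeasurableSpace (J L : ℕ) : ∀ i, MeasurableSpace (andOrType J L i) := fun i =>
  match i with
  | .inl _ => inferInstance
  | .inr (.inl _) => inferInstance
  | .inr (.inr (.inl _)) => inferInstance
  | .inr (.inr (.inr _)) => inferInstance

/-!
If a count `N` is independent of events `A 0, A 1, …` that all have probability `p`, then
conditioning on `N = d` gives `P(A n for all n < N) = ∑_d P(N = d) p ^ d`, the generating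
function of `N` at `p`. At the leaves this yields `ω_k(1 - y_k)` for each branch of a slot;
independence of the branches and the channel, together with the law of total probability over
the class `C`, yields the slot-resolution probability `∑_m w_m (1 - e_m) ∏_k ω_k(1 - y_k)`;
applied once more to the complementary slot events it yields `Λ_j(1 - …)` for each slot class,
and independence of the slot classes gives the product. Each independence used is obtained by
grouping the mutually independent family into disjoint blocks of indices.
-/

theorem ProbabilityTheory.iIndep.iSup_of_pairwise_disjoint {Ω ι κ : Type*}
    {mΩ : MeasurableSpace Ω} {μ : Measure Ω} {m : ι → MeasurableSpace Ω}
    (h_le : ∀ i, m i ≤ mΩ) (h : iIndep m μ) {T : κ → Set ι}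
    (hT : Pairwise (Function.onFun Disjoint T)) :
    iIndep (fun k => ⨆ i ∈ T k, m i) μ := by
  classical
  have := h.isProbabilityMeasure
  refine (iIndep_iff _ μ).2 fun s f hf => ?_
  induction s using Finset.induction_on with
  | empty => simp
  | insert a s ha ih =>
    have hdisj : Disjoint (T a) (⋃ k ∈ s, T k) :=
      Set.disjoint_iUnion₂_right.2 fun k hk => hT (ne_of_mem_of_not_mem hk ha).symm
    have hsub : ∀ k ∈ s, ⨆ i ∈ T k, m i ≤ ⨆ i ∈ ⋃ k ∈ s, T k, m i := fun k hk =>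
      biSup_mono fun i hi => Set.mem_biUnion hk hi
    rw [Finset.set_biInter_insert, Finset.prod_insert ha,
      ← ih fun k hk => hf k (mem_insert_of_mem hk)]
    exact (Indep_iff _ _ μ).1 (indep_iSup_of_disjoint h_le h hdisj) _ _
      (hf a (mem_insert_self a s))
      (Finset.measurableSet_biInter s fun k hk => hsub k hk _ (hf k (mem_insert_of_mem hk)))

theorem measurable_biSup_comap {Ω ι : Type*} {β : ι → Type*}
    [mβ : ∀ i, MeasurableSpace (β i)] (f : ∀ i, Ω → β i) {S : Set ι} {i : ι} (hi : i ∈ S) :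
    Measurable[⨆ i ∈ S, (mβ i).comap (f i)] (f i) :=
  (comap_measurable (f i)).mono (le_biSup (fun i => (mβ i).comap (f i)) hi) le_rfl

theorem measurableSet_setOf_forall_lt {Ω : Type*} {mΩ : MeasurableSpace Ω} {N : Ω → ℕ}
    {A : ℕ → Set Ω} (hN : Measurable N) (hA : ∀ n, MeasurableSet (A n)) :
    MeasurableSet {ω | ∀ n < N ω, ω ∈ A n} := by
  have : {ω | ∀ n < N ω, ω ∈ A n} = ⋂ n, {ω | n < N ω}ᶜ ∪ A n := by
    ext ω; simp [imp_iff_not_or]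
  rw [this]
  exact .iInter fun n => (hN measurableSet_Ioi).compl.union (hA n)

theorem measureReal_eq_sum_inter_fiber {Ω β : Type*} [MeasurableSpace Ω] {μ : Measure Ω}
    [IsFiniteMeasure μ] [Fintype β] [MeasurableSpace β] [MeasurableSingletonClass β]
    {f : Ω → β} (hf : Measurable f) (s : Set Ω) :
    μ.real s = ∑ b, μ.real (s ∩ {ω | f ω = b}) := by
  have := sum_measureReal_preimage_singleton (μ := μ.restrict s) univ
    (fun b _ => hf (measurableSet_singleton b))
  rw [coe_univ, Set.preimage_univ, measureReal_restrict_apply_univ] at this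
  rw [← this]
  refine sum_congr rfl fun b _ => ?_
  rw [measureReal_restrict_apply (hf (measurableSet_singleton b)), Set.inter_comm]
  rfl

theorem measureReal_setOf_forall_lt_eq_tsum {Ω : Type*} {mΩ : MeasurableSpace Ω}
    {μ : Measure Ω} {m : Option ℕ → MeasurableSpace Ω} (h_le : ∀ o, m o ≤ mΩ)
    (h_ind : iIndep m μ) {N : Ω → ℕ} (hN : Measurable[m none] N) {A : ℕ → Set Ω}
    (hA : ∀ n, MeasurableSet[m (some n)] (A n)) {p : ℝ} (hp : ∀ n, μ.real (A n) = p) :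
    μ.real {ω | ∀ n < N ω, ω ∈ A n} = ∑' d, μ.real {ω | N ω = d} * p ^ d := by
  have := h_ind.isProbabilityMeasure
  set B : ℕ → Set Ω := fun d => {ω | N ω = d} ∩ ⋂ n ∈ range d, A n
  have hunion : {ω | ∀ n < N ω, ω ∈ A n} = ⋃ d, B d := by
    ext ω
    simp only [B, Set.mem_ofPred_eq, Set.mem_iUnion, Set.mem_inter_iff, Set.mem_iInter,
      mem_range, exists_eq_left']
  have hB : ∀ d, μ (B d) = μ {ω | N ω = d} * ∏ n ∈ range d, μ (A n) := by
    intro d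
    calc μ (B d) = μ (⋂ o ∈ insertNone (range d), o.elim {ω | N ω = d} A) := by
          congr 1; ext ω
          simp only [B, Set.mem_iInter₂, forall_mem_insertNone, Set.mem_inter_iff, Option.elim]
      _ = ∏ o ∈ insertNone (range d), μ (o.elim {ω | N ω = d} A) := by
          refine h_ind.meas_biInter ?_
          rintro (_ | n) _
          · exact hN (measurableSet_singleton d)
          · exact hA n
      _ = μ {ω | N ω = d} * ∏ n ∈ range d, μ (A n) := prod_insertNone _ _
  have hBm : ∀ d, MeasurableSet (B d) := fun d =>
    (h_le none _ (hN (measurableSet_singleton d))).inter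
      (Finset.measurableSet_biInter _ fun n _ => h_le _ _ (hA n))
  have hdisj : Pairwise (Function.onFun Disjoint B) := fun d d' hdd' =>
    Set.disjoint_left.2 fun ω h h' => hdd' (h.1.symm.trans h'.1)
  rw [hunion, measureReal_def, measure_iUnion hdisj hBm,
    ENNReal.tsum_toReal_eq fun d => measure_ne_top μ _]
  refine tsum_congr fun d => ?_
  rw [hB, ENNReal.toReal_mul, ENNReal.toReal_prod]
  simp only [← measureReal_def, hp, prod_const, card_range]

section AndOrTree

variable {Ω : Type*} {J L : ℕ} (D : Fin J → Ω → ℕ) (C : Fin J → ℕ → Ω → Fin L)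
  (E : Fin J → ℕ → Ω → Bool) (D' : Fin J → ℕ → Fin L → Ω → ℕ)
  (Z : Fin J → ℕ → Fin L → ℕ → Ω → Bool)

def andOrFamily : ∀ i : andOrIndex J L, Ω → andOrType J L i
  | .inl j => D j
  | .inr (.inl p) => fun ω => (C p.1 p.2 ω, E p.1 p.2 ω)
  | .inr (.inr (.inl q)) => D' q.1 q.2.1 q.2.2
  | .inr (.inr (.inr s)) => Z s.1 s.2.1 s.2.2.1 s.2.2.2

abbrev andOrSigma (S : Set (andOrIndex J L)) : MeasurableSpace Ω :=
  ⨆ i ∈ S, (andOrMeasurableSpace J L i).comap (andOrFamily D C E D' Z i)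

-- The fibres of these maps are the blocks of indices grouped at the user, slot, branch and
-- leaf level of the tree.
def andOrIndex.user : andOrIndex J L → Fin J
  | .inl j => j
  | .inr (.inl p) => p.1
  | .inr (.inr (.inl q)) => q.1
  | .inr (.inr (.inr s)) => s.1

def andOrIndex.slot : andOrIndex J L → Option ℕ
  | .inl _ => none
  | .inr (.inl p) => some p.2
  | .inr (.inr (.inl q)) => some q.2.1
  | .inr (.inr (.inr s)) => some s.2.1

def andOrIndex.branch : andOrIndex J L → Option (Fin L)
  | .inr (.inr (.inl q)) => some q.2.2
  | .inr (.inr (.inr s)) => some s.2.2.1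
  | _ => none

def andOrIndex.leaf : andOrIndex J L → Option ℕ
  | .inr (.inr (.inr s)) => some s.2.2.2
  | _ => none

def branchResolved (j : Fin J) (n : ℕ) (k : Fin L) : Set Ω :=
  {ω | ∀ t < D' j n k ω, Z j n k t ω = true}

def slotResolved (j : Fin J) (n : ℕ) : Set Ω :=
  {ω | E j n ω = true ∧ ∀ k, ∀ t < D' j n k ω, Z j n k t ω = true}

def userUnresolved (j : Fin J) : Set Ω :=
  {ω | ∀ n < D j ω, ω ∉ slotResolved E D' Z j n}

theorem slotResolved_eq_inter (j : Fin J) (n : ℕ) :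
    slotResolved E D' Z j n = {ω | E j n ω = true} ∩ ⋂ k, branchResolved D' Z j n k := by
  ext ω
  simp [slotResolved, branchResolved]

variable {D C E D' Z} {S : Set (andOrIndex J L)} {j : Fin J} {n : ℕ}

namespace andOrSigma

theorem measurable_D (h : .inl j ∈ S) : Measurable[andOrSigma D C E D' Z S] (D j) :=
  measurable_biSup_comap (andOrFamily D C E D' Z) h

theorem measurable_E (h : .inr (.inl (j, n)) ∈ S) : Measurable[andOrSigma D C E D' Z S] (E j n) :=
  measurable_snd.comp (measurable_biSup_comap (andOrFamily D C E D' Z) h)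

theorem measurable_D' {k : Fin L} (h : .inr (.inr (.inl (j, n, k))) ∈ S) :
    Measurable[andOrSigma D C E D' Z S] (D' j n k) :=
  measurable_biSup_comap (andOrFamily D C E D' Z) h

theorem measurable_Z {k : Fin L} {t : ℕ} (h : .inr (.inr (.inr (j, n, k, t))) ∈ S) :
    Measurable[andOrSigma D C E D' Z S] (Z j n k t) :=
  measurable_biSup_comap (andOrFamily D C E D' Z) h

end andOrSigma

theorem measurableSet_branchResolved {k : Fin L} (hD' : .inr (.inr (.inl (j, n, k))) ∈ S)
    (hZ : ∀ t, .inr (.inr (.inr (j, n, k, t))) ∈ S) :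
    MeasurableSet[andOrSigma D C E D' Z S] (branchResolved D' Z j n k) :=
  measurableSet_setOf_forall_lt (A := fun t => {ω | Z j n k t ω = true})
    (andOrSigma.measurable_D' hD') fun t =>
      andOrSigma.measurable_Z (hZ t) (measurableSet_singleton true)

theorem measurableSet_slotResolved (hE : .inr (.inl (j, n)) ∈ S)
    (hD' : ∀ k, .inr (.inr (.inl (j, n, k))) ∈ S)
    (hZ : ∀ k t, .inr (.inr (.inr (j, n, k, t))) ∈ S) :
    MeasurableSet[andOrSigma D C E D' Z S] (slotResolved E D' Z j n) := by
  rw [slotResolved_eq_inter]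
  exact (andOrSigma.measurable_E hE (measurableSet_singleton true)).inter
    (.iInter fun k => measurableSet_branchResolved (hD' k) (hZ k))

theorem measurableSet_userUnresolved :
    MeasurableSet[andOrSigma D C E D' Z (andOrIndex.user ⁻¹' {j})] (userUnresolved D E D' Z j) :=
  measurableSet_setOf_forall_lt (A := fun n => (slotResolved E D' Z j n)ᶜ)
    (andOrSigma.measurable_D rfl)
    fun _ => (measurableSet_slotResolved (by rfl) (fun _ => by rfl) fun _ _ => by rfl).compl

variable [MeasurableSpace Ω] {P : Measure Ω}

theorem measurable_andOrFamily (hD : ∀ j, Measurable (D j)) (hC : ∀ j n, Measurable (C j n))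
    (hE : ∀ j n, Measurable (E j n)) (hD' : ∀ j n k, Measurable (D' j n k))
    (hZ : ∀ j n k t, Measurable (Z j n k t)) : ∀ i, Measurable (andOrFamily D C E D' Z i)
  | .inl j => hD j
  | .inr (.inl p) => (hC p.1 p.2).prodMk (hE p.1 p.2)
  | .inr (.inr (.inl q)) => hD' q.1 q.2.1 q.2.2
  | .inr (.inr (.inr s)) => hZ s.1 s.2.1 s.2.2.1 s.2.2.2

theorem andOrSigma_le (hFm : ∀ i, Measurable (andOrFamily D C E D' Z i)) :
    andOrSigma D C E D' Z S ≤ ‹MeasurableSpace Ω› :=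
  iSup₂_le fun i _ => (hFm i).comap_le

theorem iIndep_andOrSigma_fiber {κ : Type*} (hF : iIndepFun (andOrFamily D C E D' Z) P)
    (hFm : ∀ i, Measurable (andOrFamily D C E D' Z i)) (g : andOrIndex J L → κ) :
    iIndep (fun c => andOrSigma D C E D' Z (g ⁻¹' {c})) P :=
  hF.iIndep.iSup_of_pairwise_disjoint (fun i => (hFm i).comap_le) (pairwise_disjoint_fiber g)

theorem measureReal_branchResolved (hF : iIndepFun (andOrFamily D C E D' Z) P)
    (hFm : ∀ i, Measurable (andOrFamily D C E D' Z i)) {k : Fin L} {p : ℝ}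
    (hZ : ∀ t, P.real {ω | Z j n k t ω = true} = p) :
    P.real (branchResolved D' Z j n k) = ∑' d, P.real {ω | D' j n k ω = d} * p ^ d :=
  measureReal_setOf_forall_lt_eq_tsum (A := fun t => {ω | Z j n k t ω = true})
    (fun _ => andOrSigma_le hFm) (iIndep_andOrSigma_fiber hF hFm andOrIndex.leaf)
    (andOrSigma.measurable_D' (by rfl))
    (fun _ => andOrSigma.measurable_Z (by rfl) (measurableSet_singleton true)) hZ

theorem measureReal_slotResolved (hF : iIndepFun (andOrFamily D C E D' Z) P)
    (hFm : ∀ i, Measurable (andOrFamily D C E D' Z i)) :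
    P.real (slotResolved E D' Z j n)
      = P.real {ω | E j n ω = true} * ∏ k, P.real (branchResolved D' Z j n k) := by
  have := (iIndep_andOrSigma_fiber hF hFm andOrIndex.branch).meas_iInter
    (s := fun o => o.elim {ω | E j n ω = true} (branchResolved D' Z j n)) <| by
      rintro (_ | k)
      · exact andOrSigma.measurable_E (by rfl) (measurableSet_singleton true)
      · exact measurableSet_branchResolved (by rfl) fun _ => by rfl
  simp only [Set.iInter_option, Fintype.prod_option, Option.elim] at this
  rw [slotResolved_eq_inter, measureReal_def, this, ENNReal.toReal_mul, ENNReal.toReal_prod]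
  rfl

theorem measureReal_userUnresolved (hF : iIndepFun (andOrFamily D C E D' Z) P)
    (hFm : ∀ i, Measurable (andOrFamily D C E D' Z i)) {q : ℝ}
    (hR : ∀ n, P.real (slotResolved E D' Z j n) = q) :
    P.real (userUnresolved D E D' Z j) = ∑' d, P.real {ω | D j ω = d} * (1 - q) ^ d := by
  have := hF.isProbabilityMeasure
  have hmeas : ∀ n, MeasurableSet[andOrSigma D C E D' Z (andOrIndex.slot ⁻¹' {some n})]
      (slotResolved E D' Z j n) := fun n =>
    measurableSet_slotResolved rfl (fun _ => rfl) fun _ _ => rfl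
  exact measureReal_setOf_forall_lt_eq_tsum (A := fun n => (slotResolved E D' Z j n)ᶜ)
    (fun _ => andOrSigma_le hFm) (iIndep_andOrSigma_fiber hF hFm andOrIndex.slot)
    (andOrSigma.measurable_D (by rfl)) (fun n => (hmeas n).compl)
    fun n => by rw [probReal_compl_eq_one_sub (andOrSigma_le hFm _ (hmeas n)), hR]

theorem measureReal_iInter_userUnresolved (hF : iIndepFun (andOrFamily D C E D' Z) P)
    (hFm : ∀ i, Measurable (andOrFamily D C E D' Z i)) :
    P.real (⋂ j, userUnresolved D E D' Z j) = ∏ j, P.real (userUnresolved D E D' Z j) := by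
  rw [measureReal_def, (iIndep_andOrSigma_fiber hF hFm andOrIndex.user).meas_iInter
    fun _ => measurableSet_userUnresolved, ENNReal.toReal_prod]
  rfl

end AndOrTree

theorem and_or_tree_evaluation_general {Ω : Type} [MeasurableSpace Ω]
    (P : Measure Ω) [IsProbabilityMeasure P]
    (J L : ℕ)
    (D : Fin J → Ω → ℕ)
    (C : Fin J → ℕ → Ω → Fin L) (E : Fin J → ℕ → Ω → Bool)
    (D' : Fin J → ℕ → Fin L → Ω → ℕ)
    (Z : Fin J → ℕ → Fin L → ℕ → Ω → Bool)
    (w : Fin L → ℝ) (e : Fin L → ℝ) (y : Fin L → ℝ)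
    (hE : ∀ j n m,
      (P ({ω | E j n ω = true} ∩ {ω | C j n ω = m})).toReal = (1 - e m) * w m)
    (hZ : ∀ j n k t, (P {ω | Z j n k t ω = true}).toReal = 1 - y k)
    (Λ : Fin J → ℝ → ℝ)
    (hΛ : ∀ j x, Λ j x = ∑' d : ℕ, (P {ω | D j ω = d}).toReal * x ^ d)
    (ωf : Fin L → ℝ → ℝ)
    (hωf : ∀ j n k x, ωf k x = ∑' d : ℕ, (P {ω | D' j n k ω = d}).toReal * x ^ d)
    (hDm : ∀ j, Measurable (D j)) (hCm : ∀ j n, Measurable (C j n))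
    (hEm : ∀ j n, Measurable (E j n)) (hD'm : ∀ j n k, Measurable (D' j n k))
    (hZm : ∀ j n k t, Measurable (Z j n k t))
    (hindep : iIndepFun (m := andOrMeasurableSpace J L)
      (fun i : andOrIndex J L =>
        match i with
        | .inl j => D j
        | .inr (.inl p) => fun ω => (C p.1 p.2 ω, E p.1 p.2 ω)
        | .inr (.inr (.inl q)) => D' q.1 q.2.1 q.2.2
        | .inr (.inr (.inr s)) => Z s.1 s.2.1 s.2.2.1 s.2.2.2) P) :
    (P {ω | ∀ j, ∀ n, n < D j ω →
        ¬ (E j n ω = true ∧ ∀ k, ∀ t, t < D' j n k ω → Z j n k t ω = true)}).toReal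
      = ∏ j, Λ j (1 - ∑ m, w m * (1 - e m) * ∏ k, ωf k (1 - y k)) := by
  have hF : iIndepFun (andOrFamily D C E D' Z) P := hindep
  have hFm := measurable_andOrFamily hDm hCm hEm hD'm hZm
  have hB : ∀ j n k, P.real (branchResolved D' Z j n k) = ωf k (1 - y k) := fun j n k =>
    (measureReal_branchResolved hF hFm (hZ j n k)).trans (hωf j n k _).symm
  have hchannel : ∀ j n, P.real {ω | E j n ω = true} = ∑ m, (1 - e m) * w m := fun j n =>
    (measureReal_eq_sum_inter_fiber (hCm j n) _).trans (sum_congr rfl fun m _ => hE j n m)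
  have hR : ∀ j n, P.real (slotResolved E D' Z j n)
      = ∑ m, w m * (1 - e m) * ∏ k, ωf k (1 - y k) := fun j n => by
    rw [measureReal_slotResolved hF hFm, hchannel, sum_mul]
    simp only [hB, mul_comm (1 - e _)]
  have hU : ∀ j, P.real (userUnresolved D E D' Z j)
      = Λ j (1 - ∑ m, w m * (1 - e m) * ∏ k, ωf k (1 - y k)) := fun j =>
    (measureReal_userUnresolved hF hFm (hR j)).trans (hΛ j _).symm
  have hset : {ω | ∀ j, ∀ n, n < D j ω →
      ¬ (E j n ω = true ∧ ∀ k, ∀ t, t < D' j n k ω → Z j n k t ω = true)}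
      = ⋂ j, userUnresolved D E D' Z j := (Set.iInter_ofPred _).symm
  rw [hset]
  exact (measureReal_iInter_userUnresolved hF hFm).trans (prod_congr rfl fun j _ => hU j)

/-- Theorem 1 of the paper, one iteration on a depth-2 and-or tree: the probability that a
user is unresolved (every incident slot fails to resolve it) equals
`∏_j Λ_j(1 − Σ_m w_m (1 − e_m) ∏_k ω_k(1 − y_k))`. -/
theorem and_or_tree_evaluation {Ω : Type} [MeasurableSpace Ω]
    (P : Measure Ω) [IsProbabilityMeasure P]
    (J L : ℕ) (hJ : 0 < J) (hL : 0 < L)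
    (D : Fin J → Ω → ℕ)
    (C : Fin J → ℕ → Ω → Fin L) (E : Fin J → ℕ → Ω → Bool)
    (D' : Fin J → ℕ → Fin L → Ω → ℕ)
    (Z : Fin J → ℕ → Fin L → ℕ → Ω → Bool)
    (w : Fin L → ℝ) (e : Fin L → ℝ) (y : Fin L → ℝ)
    (hw0 : ∀ m, 0 ≤ w m) (hwsum : ∑ m, w m = 1)
    (he : ∀ m, e m ∈ Set.Icc (0 : ℝ) 1) (hy : ∀ k, y k ∈ Set.Icc (0 : ℝ) 1)
    (hC : ∀ j n m, (P {ω | C j n ω = m}).toReal = w m)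
    (hE : ∀ j n m,
      (P ({ω | E j n ω = true} ∩ {ω | C j n ω = m})).toReal = (1 - e m) * w m)
    (hZ : ∀ j n k t, (P {ω | Z j n k t ω = true}).toReal = 1 - y k)
    (Λ : Fin J → ℝ → ℝ)
    (hΛ : ∀ j x, Λ j x = ∑' d : ℕ, (P {ω | D j ω = d}).toReal * x ^ d)
    (ωf : Fin L → ℝ → ℝ)
    (hωf : ∀ j n k x, ωf k x = ∑' d : ℕ, (P {ω | D' j n k ω = d}).toReal * x ^ d)
    (hDm : ∀ j, Measurable (D j)) (hCm : ∀ j n, Measurable (C j n))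
    (hEm : ∀ j n, Measurable (E j n)) (hD'm : ∀ j n k, Measurable (D' j n k))
    (hZm : ∀ j n k t, Measurable (Z j n k t))
    (hindep : iIndepFun (m := andOrMeasurableSpace J L)
      (fun i : andOrIndex J L =>
        match i with
        | .inl j => D j
        | .inr (.inl p) => fun ω => (C p.1 p.2 ω, E p.1 p.2 ω)
        | .inr (.inr (.inl q)) => D' q.1 q.2.1 q.2.2
        | .inr (.inr (.inr s)) => Z s.1 s.2.1 s.2.2.1 s.2.2.2) P) :
    (P {ω | ∀ j, ∀ n, n < D j ω →
        ¬ (E j n ω = true ∧ ∀ k, ∀ t, t < D' j n k ω → Z j n k t ω = true)}).toReal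
      = ∏ j, Λ j (1 - ∑ m, w m * (1 - e m) * ∏ k, ωf k (1 - y k)) :=
  and_or_tree_evaluation_general P J L D C E D' Z w e y hE hZ Λ hΛ ωf hωf hDm hCm hEm hD'm hZm
    hindep
end
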